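/- arXiv:2502.07752 — 5 statements merged into one kernel-verified Lean document; each statement's English description precedes it below -/
import Mathlib

section
/- Powers–Størmer inequality: for positive semidefinite matrices A and B, ‖A − B‖_F² = tr((A−B)ᵀ(A−B)) ≤ ‖A² − B²‖₁, where ‖·‖₁ is the trace norm (sum of singular values). -/
open Matrix

lemma psd_diag_nonneg' {N : ℕ} {M : Matrix (Fin N) (Fin N) ℝ} (h : M.PosSemidef) (i : Fin N) :
    0 ≤ M i i := by
  exact h.diag_nonneg

/-- Powers–Størmer: for PSD matrices `A`, `B`,
`tr((A−B)ᵀ(A−B)) ≤ ‖A² − B²‖₁`, where the trace norm of the (Hermitian) matrix `A² − B²`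
is the sum of the absolute values of its eigenvalues (= its singular values). -/
theorem stmt5 {N : ℕ} (A B : Matrix (Fin N) (Fin N) ℝ)
    (hA : A.PosSemidef) (hB : B.PosSemidef)
    (hH : (A * A - B * B).IsHermitian) :
    Matrix.trace ((A - B)ᵀ * (A - B)) ≤ ∑ i, |hH.eigenvalues i| := by
  have hS : (A - B).IsHermitian := hA.1.sub hB.1
  set U : Matrix (Fin N) (Fin N) ℝ := ↑hS.eigenvectorUnitary with hUdef
  set lam : Fin N → ℝ := hS.eigenvalues with hlamdef
  have hUmem : U ∈ Matrix.unitaryGroup (Fin N) ℝ := hS.eigenvectorUnitary.2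
  have hUU : star U * U = 1 := mem_unitaryGroup_iff'.mp hUmem
  have hUU' : U * star U = 1 := mem_unitaryGroup_iff.mp hUmem
  have hdiag : star U * (A - B) * U = diagonal lam := by
    have := hS.conjStarAlgAut_star_eigenvectorUnitary
    simpa using this
  have conj_mul : ∀ X Y : Matrix (Fin N) (Fin N) ℝ,
      star U * (X * Y) * U = (star U * X * U) * (star U * Y * U) := by
    intro X Y
    have h1 : (star U * X * U) * (star U * Y * U) = star U * X * (U * star U) * (Y * U) := by
      noncomm_ring
    rw [h1, hUU']
    noncomm_ring
  -- trace((A-B)ᵀ(A-B)) = ∑ lam i ^ 2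
  have hT : (A - B)ᵀ = A - B := by simpa using hS.eq
  have htrace : Matrix.trace ((A - B)ᵀ * (A - B)) = ∑ i, lam i ^ 2 := by
    rw [hT]
    have h1 : Matrix.trace ((A - B) * (A - B)) =
        Matrix.trace (star U * ((A - B) * (A - B)) * U) := by
      rw [trace_mul_cycle, ← mul_assoc, hUU', one_mul]
    rw [h1, conj_mul, hdiag, diagonal_mul_diagonal, trace_diagonal]
    exact Finset.sum_congr rfl fun i _ => (sq (lam i)).symm
  set d : Fin N → ℝ := fun i => (star U * (A + B) * U) i i with hddef
  set m : Fin N → ℝ := fun i => (star U * (A * A - B * B) * U) i i with hmdef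
  -- m i = lam i * d i
  have hm : ∀ i, m i = lam i * d i := by
    intro i
    have hdouble : star U * (A * A - B * B) * U + star U * (A * A - B * B) * U =
        diagonal lam * (star U * (A + B) * U) + (star U * (A + B) * U) * diagonal lam := by
      have h1 : star U * (A * A - B * B) * U + star U * (A * A - B * B) * U =
          star U * ((A - B) * (A + B)) * U + star U * ((A + B) * (A - B)) * U := by
        noncomm_ring
      rw [h1, conj_mul, conj_mul, hdiag]
    have := congrFun (congrFun hdouble i) i
    simp only [Matrix.add_apply, diagonal_mul, mul_diagonal] at this
    have hmi : m i + m i = lam i * d i + d i * lam i := this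
    linarith [hmi]
  -- |lam i| ≤ d i
  have habs : ∀ i, |lam i| ≤ d i := by
    intro i
    have h1 : 0 ≤ (Uᴴ * A * U) i i := psd_diag_nonneg' (hA.conjTranspose_mul_mul_same U) i
    have h2 : 0 ≤ (Uᴴ * B * U) i i := psd_diag_nonneg' (hB.conjTranspose_mul_mul_same U) i
    have hlam : lam i = (star U * (A - B) * U) i i := by
      rw [hdiag]; simp
    have e1 : star U * (A + B) * U + star U * (A - B) * U = Uᴴ * A * U + Uᴴ * A * U := by
      rw [Matrix.star_eq_conjTranspose]; noncomm_ring
    have e2 : star U * (A + B) * U - star U * (A - B) * U = Uᴴ * B * U + Uᴴ * B * U := by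
      rw [Matrix.star_eq_conjTranspose]; noncomm_ring
    have e1' := congrFun (congrFun e1 i) i
    have e2' := congrFun (congrFun e2 i) i
    simp only [Matrix.add_apply, Matrix.sub_apply] at e1' e2'
    rw [abs_le]
    constructor
    · have : d i + lam i = (Uᴴ * A * U) i i + (Uᴴ * A * U) i i := by
        rw [hddef, hlam]; exact e1'
      linarith
    · have : d i - lam i = (Uᴴ * B * U) i i + (Uᴴ * B * U) i i := by
        rw [hddef, hlam]; exact e2'
      linarith
  -- ∑ lam i ^ 2 ≤ ∑ |m i|
  have step1 : ∑ i, lam i ^ 2 ≤ ∑ i, |m i| := by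
    apply Finset.sum_le_sum
    intro i _
    have hd0 : 0 ≤ d i := le_trans (abs_nonneg _) (habs i)
    have hle : lam i ^ 2 ≤ |lam i| * d i := by
      nlinarith [abs_nonneg (lam i), habs i, sq_abs (lam i)]
    calc lam i ^ 2 ≤ |lam i| * d i := hle
      _ = |lam i * d i| := by rw [abs_mul, abs_of_nonneg hd0]
      _ = |m i| := by rw [hm i]
  -- ∑ |m i| ≤ ∑ |μ j|
  set V : Matrix (Fin N) (Fin N) ℝ := ↑hH.eigenvectorUnitary with hVdef
  set mu : Fin N → ℝ := hH.eigenvalues with hmudef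
  have hVmem : V ∈ Matrix.unitaryGroup (Fin N) ℝ := hH.eigenvectorUnitary.2
  have hVV : star V * V = 1 := mem_unitaryGroup_iff'.mp hVmem
  have hspecM : A * A - B * B = V * diagonal mu * star V := by
    have := hH.spectral_theorem
    simpa using this
  set W : Matrix (Fin N) (Fin N) ℝ := star V * U with hWdef
  have hWstar : star W = star U * V := by rw [hWdef]; simp
  have hWW : W * star W = 1 := by
    rw [hWdef, hWstar, mul_assoc, ← mul_assoc U, hUU', one_mul, hVV]
  have hmW : ∀ i, m i = ∑ j, mu j * (W j i * W j i) := by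
    intro i
    have hconj : star U * (A * A - B * B) * U = star W * diagonal mu * W := by
      rw [hspecM, hWstar, hWdef]
      noncomm_ring
    show (star U * (A * A - B * B) * U) i i = _
    calc (star U * (A * A - B * B) * U) i i
        = (star W * (diagonal mu * W)) i i := by rw [hconj, mul_assoc]
      _ = ∑ j, star W i j * (diagonal mu * W) j i := Matrix.mul_apply
      _ = ∑ j, mu j * (W j i * W j i) := by
          refine Finset.sum_congr rfl fun j _ => ?_
          rw [Matrix.diagonal_mul, Matrix.star_apply, star_trivial]
          ring
  have hrow : ∀ j, ∑ i, W j i * W j i = 1 := by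
    intro j
    have := congrFun (congrFun hWW j) j
    simp only [Matrix.mul_apply, Matrix.one_apply_eq] at this
    rw [← this]
    apply Finset.sum_congr rfl
    intro i _
    rw [Matrix.star_apply]
    simp [star]
  have step2 : ∑ i, |m i| ≤ ∑ j, |mu j| := by
    calc ∑ i, |m i| ≤ ∑ i, ∑ j, |mu j| * (W j i * W j i) := by
          apply Finset.sum_le_sum
          intro i _
          rw [hmW i]
          refine le_trans (Finset.abs_sum_le_sum_abs _ _) ?_
          apply Finset.sum_le_sum
          intro j _
          rw [abs_mul]
          have : |W j i * W j i| = W j i * W j i := abs_of_nonneg (mul_self_nonneg _)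
          rw [this]
      _ = ∑ j, |mu j| * ∑ i, (W j i * W j i) := by
          rw [Finset.sum_comm]
          apply Finset.sum_congr rfl
          intro j _
          rw [Finset.mul_sum]
      _ = ∑ j, |mu j| := by
          apply Finset.sum_congr rfl
          intro j _
          rw [hrow j, mul_one]
  rw [htrace]
  exact le_trans step1 step2
end

section
/- Let G ∈ ℝ^{m×n} be a random matrix. Over all mn×mn matrices of the form Iₙ ⊗ M with M ∈ ℝ^{m×m} symmetric positive definite, the squared Frobenius distance ‖Iₙ ⊗ M − E[vec(G)vec(G)ᵀ]‖_F² is minimized at M* = (1/n) E[G Gᵀ]. -/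
open Matrix Kronecker

/-- Squared Frobenius norm of a real matrix. -/
noncomputable def sqFrob {α β : Type*} [Fintype α] [Fintype β] (M : Matrix α β ℝ) : ℝ :=
  ∑ i, ∑ j, M i j ^ 2

lemma mean_min (n : ℕ) (c : Fin n → ℝ) (x : ℝ) :
    ∑ j, ((n : ℝ)⁻¹ * ∑ i, c i - c j) ^ 2 ≤ ∑ j, (x - c j) ^ 2 := by
  rcases Nat.eq_zero_or_pos n with h | h
  · subst h; simp
  have hn : (n : ℝ) ≠ 0 := by positivity
  set μ := (n : ℝ)⁻¹ * ∑ i, c i with hμ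
  have hs : ∑ i, c i = (n : ℝ) * μ := by rw [hμ, mul_inv_cancel_left₀ hn]
  have expand : ∀ j, (x - c j) ^ 2
      = (μ - c j) ^ 2 + ((x - μ) ^ 2 + 2 * (x - μ) * (μ - c j)) := by
    intro j; ring
  have hzero : ∑ j : Fin n, (μ - c j) = 0 := by
    rw [Finset.sum_sub_distrib, Finset.sum_const, hs, Finset.card_univ, Fintype.card_fin,
      nsmul_eq_mul]
    ring
  calc ∑ j, (μ - c j) ^ 2
      ≤ ∑ j, (μ - c j) ^ 2 + (n : ℝ) * (x - μ) ^ 2 :=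
        le_add_of_nonneg_right (by positivity)
    _ = ∑ j, (x - c j) ^ 2 := by
        simp_rw [expand, Finset.sum_add_distrib, ← Finset.mul_sum, hzero, Finset.sum_const,
          Finset.card_univ, Fintype.card_fin, nsmul_eq_mul]
        ring

/-- over SPD matrices `M`, the squared Frobenius distance
`‖Iₙ ⊗ M − E[vec(G)vec(G)ᵀ]‖_F²` is minimized at `M* = (1/n) E[G Gᵀ]`. -/
theorem stmt6 {m n : ℕ} {ι : Type*} [Fintype ι]
    (w : ι → ℝ) (hw : ∀ k, 0 ≤ w k) (hw1 : ∑ k, w k = 1)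
    (G : ι → Matrix (Fin m) (Fin n) ℝ)
    -- F = E[vec(G) vec(G)ᵀ], column-stacking vec, indices (column, row)
    (F : Matrix (Fin n × Fin m) (Fin n × Fin m) ℝ)
    (hF : F = Matrix.of fun p q => ∑ k, w k * (G k p.2 p.1 * G k q.2 q.1))
    -- Mstar = (1/n) E[G Gᵀ]
    (Mstar : Matrix (Fin m) (Fin m) ℝ)
    (hMstar : Mstar = (n : ℝ)⁻¹ • Matrix.of fun a b => ∑ k, w k * ∑ j, G k a j * G k b j) :
    ∀ M : Matrix (Fin m) (Fin m) ℝ, M.PosDef →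
      sqFrob ((1 : Matrix (Fin n) (Fin n) ℝ) ⊗ₖ Mstar - F) ≤
        sqFrob ((1 : Matrix (Fin n) (Fin n) ℝ) ⊗ₖ M - F) := by
  intro M _
  have expand : ∀ X : Matrix (Fin m) (Fin m) ℝ,
      sqFrob ((1 : Matrix (Fin n) (Fin n) ℝ) ⊗ₖ X - F)
        = (∑ j : Fin n, ∑ a : Fin m, ∑ b : Fin m,
            ((X a b - F (j, a) (j, b)) ^ 2 - F (j, a) (j, b) ^ 2))
          + ∑ p, ∑ q, F p q ^ 2 := by
    intro X
    unfold sqFrob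
    simp_rw [Fintype.sum_prod_type]
    have hterm : ∀ (j j' : Fin n) (a b : Fin m),
        (((1 : Matrix (Fin n) (Fin n) ℝ) ⊗ₖ X - F) (j, a) (j', b)) ^ 2
          = (if j = j' then (X a b - F (j, a) (j', b)) ^ 2 - F (j, a) (j', b) ^ 2 else 0)
            + F (j, a) (j', b) ^ 2 := by
      intro j j' a b
      simp only [Matrix.sub_apply, Matrix.kroneckerMap_apply, Matrix.one_apply]
      by_cases h : j = j' <;> simp [h] <;> ring
    simp_rw [hterm, Finset.sum_add_distrib]
    congr 1
    refine Finset.sum_congr rfl fun j _ => ?_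
    refine Finset.sum_congr rfl fun a _ => ?_
    rw [Finset.sum_comm]
    refine Finset.sum_congr rfl fun b _ => ?_
    simp
  rw [expand Mstar, expand M]
  refine add_le_add ?_ le_rfl
  simp_rw [Finset.sum_sub_distrib]
  apply sub_le_sub_right
  have reorder : ∀ f : Fin n → Fin m → Fin m → ℝ,
      ∑ j, ∑ a, ∑ b, f j a b = ∑ a, ∑ b, ∑ j, f j a b := by
    intro f
    rw [Finset.sum_comm]
    exact Finset.sum_congr rfl fun a _ => Finset.sum_comm
  rw [reorder, reorder]
  refine Finset.sum_le_sum fun a _ => Finset.sum_le_sum fun b _ => ?_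
  have hM : Mstar a b = (n : ℝ)⁻¹ * ∑ j, F (j, a) (j, b) := by
    rw [hMstar, hF]
    simp only [Matrix.smul_apply, Matrix.of_apply, smul_eq_mul]
    congr 1
    simp_rw [Finset.mul_sum]
    exact Finset.sum_comm
  rw [hM]
  exact mean_min n (fun j => F (j, a) (j, b)) (M a b)
end

section
/- Let G ∈ ℝ^{m×n} be a random matrix, U ∈ ℝ^{m×m} an orthogonal matrix with columns u₁,…,uₘ, and consider block diagonal matrices F̃ = diag_B(U D₁ Uᵀ, …, U Dₙ Uᵀ) with each Dᵢ a positive diagonal m×m matrix. Then the squared Frobenius distance ‖F̃ − E[vec(G)vec(G)ᵀ]‖_F² is minimized over the eigenvalue matrices {Dᵢ} at Dᵢ* = diag_v(E[(Uᵀ gᵢ)^{⊙2}]), i.e. the (j,j) entry of Dᵢ* is E[(uⱼᵀ gᵢ)²]. -/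
open Matrix

lemma sum_rot {α β γ : Type*} [Fintype α] [Fintype β] [Fintype γ] (f : α → β → γ → ℝ) :
    ∑ a, ∑ b, ∑ c, f a b c = ∑ b, ∑ c, ∑ a, f a b c := by
  rw [Finset.sum_comm]
  exact Finset.sum_congr rfl fun b _ => Finset.sum_comm

lemma sqFrob_eq_trace {m : ℕ} (M : Matrix (Fin m) (Fin m) ℝ) :
    sqFrob M = (Mᵀ * M).trace := by
  simp [sqFrob, Matrix.trace, Matrix.mul_apply, Matrix.diag, sq]
  exact Finset.sum_comm

lemma sqFrob_conj {m : ℕ} (U X : Matrix (Fin m) (Fin m) ℝ) (hU : Uᵀ * U = 1) :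
    sqFrob (Uᵀ * X * U) = sqFrob X := by
  have hU' : U * Uᵀ = 1 := mul_eq_one_comm.mp hU
  rw [sqFrob_eq_trace, sqFrob_eq_trace]
  have h1 : (Uᵀ * X * U)ᵀ * (Uᵀ * X * U) = Uᵀ * (Xᵀ * X) * U := by
    simp only [Matrix.transpose_mul, Matrix.transpose_transpose, ← Matrix.mul_assoc]
    rw [Matrix.mul_assoc (Uᵀ * Xᵀ) U Uᵀ, hU', Matrix.mul_one, Matrix.mul_assoc]
  rw [h1, Matrix.trace_mul_cycle, hU', Matrix.one_mul]

lemma diag_closest {m : ℕ} (v u : Fin m → ℝ) (M : Matrix (Fin m) (Fin m) ℝ)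
    (hv : ∀ j, v j = M j j) :
    sqFrob (Matrix.diagonal v - M) ≤ sqFrob (Matrix.diagonal u - M) := by
  unfold sqFrob
  refine Finset.sum_le_sum fun i _ => Finset.sum_le_sum fun j _ => ?_
  by_cases h : i = j
  · subst h
    simp [Matrix.sub_apply, Matrix.diagonal_apply, hv i]
    positivity
  · simp [Matrix.sub_apply, Matrix.diagonal_apply, h]

lemma sqFrob_block {m n : ℕ} (X : Matrix (Fin m × Fin n) (Fin m × Fin n) ℝ) :
    sqFrob X = ∑ i : Fin n, ∑ i' : Fin n, ∑ a : Fin m, ∑ b : Fin m, X (a, i) (b, i') ^ 2 := by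
  unfold sqFrob
  rw [Fintype.sum_prod_type]
  simp_rw [Fintype.sum_prod_type]
  rw [Finset.sum_comm]
  refine Finset.sum_congr rfl fun i _ => ?_
  rw [show (∑ a : Fin m, ∑ b : Fin m, ∑ i' : Fin n, X (a, i) (b, i') ^ 2)
      = ∑ a : Fin m, ∑ i' : Fin n, ∑ b : Fin m, X (a, i) (b, i') ^ 2 from
    Finset.sum_congr rfl fun a _ => Finset.sum_comm, Finset.sum_comm]

/-- for fixed orthogonal `U`, over positive diagonal eigenvalue matrices
`Dᵢ` the squared Frobenius distance from `diag_B(U D₁ Uᵀ, …, U Dₙ Uᵀ)` to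
`F = E[vec(G)vec(G)ᵀ]` is minimized at `Dᵢ* = diag_v(E[(Uᵀ gᵢ)^{⊙2}])`,
i.e. `(Dᵢ*)ⱼⱼ = E[(uⱼᵀ gᵢ)²]`. -/
theorem stmt13 {m n : ℕ} {ι : Type*} [Fintype ι]
    (w : ι → ℝ) (hw : ∀ k, 0 ≤ w k) (hw1 : ∑ k, w k = 1)
    (G : ι → Matrix (Fin m) (Fin n) ℝ)
    (U : Matrix (Fin m) (Fin m) ℝ) (hU : Uᵀ * U = 1)
    -- F = E[vec(G) vec(G)ᵀ], vec stacking columns, index = (row, column) matching blocks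
    (F : Matrix (Fin m × Fin n) (Fin m × Fin n) ℝ)
    (hF : F = Matrix.of fun p q => ∑ k, w k * (G k p.1 p.2 * G k q.1 q.2))
    -- dstar i j = E[(uⱼᵀ gᵢ)²]
    (dstar : Fin n → Fin m → ℝ)
    (hdstar : ∀ i j, dstar i j = ∑ k, w k * (∑ a, U a j * G k a i) ^ 2) :
    ∀ d : Fin n → Fin m → ℝ, (∀ i j, 0 < d i j) →
      sqFrob (Matrix.blockDiagonal (fun i => U * Matrix.diagonal (dstar i) * Uᵀ) - F) ≤
        sqFrob (Matrix.blockDiagonal (fun i => U * Matrix.diagonal (d i) * Uᵀ) - F) := by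
  intro d _hd
  rw [sqFrob_block, sqFrob_block]
  refine Finset.sum_le_sum fun i _ => Finset.sum_le_sum fun i' _ => ?_
  by_cases h : i = i'
  · subst h
    set Fi : Matrix (Fin m) (Fin m) ℝ := Matrix.of (fun a b => F (a, i) (b, i)) with hFi
    have key : ∀ f : Fin n → Fin m → ℝ,
        (∑ a : Fin m, ∑ b : Fin m,
          ((Matrix.blockDiagonal (fun j => U * Matrix.diagonal (f j) * Uᵀ) - F) (a, i) (b, i)) ^ 2)
        = sqFrob (Matrix.diagonal (f i) - Uᵀ * Fi * U) := by
      intro f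
      have h2 : Uᵀ * (U * Matrix.diagonal (f i) * Uᵀ - Fi) * U
          = Matrix.diagonal (f i) - Uᵀ * Fi * U := by
        rw [Matrix.mul_sub, Matrix.sub_mul]
        congr 1
        simp only [← Matrix.mul_assoc]
        rw [hU, Matrix.one_mul, Matrix.mul_assoc, hU, Matrix.mul_one]
      rw [← h2, sqFrob_conj U _ hU]
      simp only [sqFrob, Matrix.sub_apply, Matrix.blockDiagonal_apply_eq, hFi, Matrix.of_apply]
    have hdiag : ∀ j, dstar i j = (Uᵀ * Fi * U) j j := by
      intro j
      rw [hdstar i j]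
      simp only [Matrix.mul_apply, Matrix.transpose_apply, hFi, Matrix.of_apply, hF, sq,
        Finset.sum_mul, Finset.mul_sum]
      rw [sum_rot]
      exact Finset.sum_congr rfl fun b _ => Finset.sum_congr rfl fun a _ =>
        Finset.sum_congr rfl fun k _ => by ring
    calc (∑ a : Fin m, ∑ b : Fin m,
          ((Matrix.blockDiagonal (fun j => U * Matrix.diagonal (dstar j) * Uᵀ) - F) (a, i) (b, i)) ^ 2)
        = sqFrob (Matrix.diagonal (dstar i) - Uᵀ * Fi * U) := key dstar
      _ ≤ sqFrob (Matrix.diagonal (d i) - Uᵀ * Fi * U) := diag_closest _ _ _ hdiag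
      _ = _ := (key d).symm
  · refine le_of_eq (Finset.sum_congr rfl fun a _ => Finset.sum_congr rfl fun b _ => ?_)
    rw [Matrix.sub_apply, Matrix.sub_apply, Matrix.blockDiagonal_apply_ne _ _ _ h,
      Matrix.blockDiagonal_apply_ne _ _ _ h]
end

section
/- Optimal compensation: let U_c ∈ ℝ^{m×(m−r)} have orthonormal columns, let G ∈ ℝ^{m×n} be random with columns gᵢ, and set F̃_c = diag_B(U_c D_{c,1} U_cᵀ, …, U_c D_{c,n} U_cᵀ) with D_{c,i} = diag_v(E[(U_cᵀ gᵢ)^{⊙2}]). Over positive diagonal n×n matrices O, the Frobenius loss ‖O ⊗ (U_c U_cᵀ) − F̃_c‖_F² is minimized at Oᵢᵢ = E[Σ_k (U_cᵀ gᵢ)_k²]/(m−r) = E[gᵢᵀgᵢ − Σ_{k=1}^{r}(Uᵀgᵢ)_k²]/(m−r), where [U, U_c] is orthogonal. -/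
open Matrix Kronecker

lemma sqFrob_eq_trace_s16 {α β : Type*} [Fintype α] [Fintype β] (M : Matrix α β ℝ) :
    sqFrob M = Matrix.trace (Mᵀ * M) := by
  simp only [sqFrob, Matrix.trace, Matrix.diag_apply, Matrix.mul_apply,
    Matrix.transpose_apply, sq]
  exact Finset.sum_comm

lemma frob_conj {s m : ℕ} (Uc : Matrix (Fin m) (Fin s) ℝ) (hUcUc : Ucᵀ * Uc = 1)
    (A : Matrix (Fin s) (Fin s) ℝ) :
    ∑ a, ∑ b, ((Uc * A * Ucᵀ) a b) ^ 2 = ∑ k, ∑ l, (A k l) ^ 2 := by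
  have h1 : ∑ a, ∑ b, ((Uc * A * Ucᵀ) a b) ^ 2 = sqFrob (Uc * A * Ucᵀ) := rfl
  rw [h1, sqFrob_eq_trace_s16]
  have h2 : (Uc * A * Ucᵀ)ᵀ * (Uc * A * Ucᵀ) = Uc * (Aᵀ * A) * Ucᵀ := by
    have ht : (Uc * A * Ucᵀ)ᵀ = Uc * Aᵀ * Ucᵀ := by
      simp [Matrix.transpose_mul, Matrix.mul_assoc]
    rw [ht]
    calc Uc * Aᵀ * Ucᵀ * (Uc * A * Ucᵀ)
        = Uc * Aᵀ * ((Ucᵀ * Uc) * (A * Ucᵀ)) := by simp [Matrix.mul_assoc]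
      _ = Uc * (Aᵀ * A) * Ucᵀ := by rw [hUcUc]; simp [Matrix.mul_assoc]
  rw [h2, Matrix.trace_mul_cycle, ← Matrix.mul_assoc, hUcUc, one_mul]
  rw [← sqFrob_eq_trace_s16]
  rfl

lemma min_quad {s : ℕ} (d : Fin s → ℝ) (x : ℝ) :
    ∑ k, ((∑ k, d k) / (s : ℝ) - d k) ^ 2 ≤ ∑ k, (x - d k) ^ 2 := by
  set D := ∑ k, d k with hD
  have expand : ∀ y : ℝ, ∑ k, (y - d k) ^ 2
      = (s : ℝ) * y ^ 2 - 2 * y * D + ∑ k, (d k) ^ 2 := by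
    intro y
    have : ∀ k, (y - d k) ^ 2 = y ^ 2 - 2 * y * d k + (d k) ^ 2 := by intro k; ring
    simp only [this, Finset.sum_add_distrib, Finset.sum_sub_distrib, ← Finset.mul_sum,
      Finset.sum_const, Finset.card_univ, Fintype.card_fin, nsmul_eq_mul, ← hD]
  rw [expand, expand]
  rcases Nat.eq_zero_or_pos s with hs | hs
  · subst hs
    have : D = 0 := by simp [hD]
    simp [this]
  · have hs' : (0 : ℝ) < (s : ℝ) := by exact_mod_cast hs
    have key : (D / (s : ℝ)) = D / (s : ℝ) := rfl
    have h1 : (s : ℝ) * (D / (s : ℝ)) ^ 2 - 2 * (D / (s : ℝ)) * D = - D ^ 2 / (s : ℝ) := by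
      field_simp; ring
    have h2 : - D ^ 2 / (s : ℝ) ≤ (s : ℝ) * x ^ 2 - 2 * x * D := by
      rw [div_le_iff₀ hs'] at *
      nlinarith [sq_nonneg ((s : ℝ) * x - D)]
    linarith [h2, h1.le, h1.ge]

/-- optimal compensation: with `[U, U_c]` orthogonal,
`F̃_c = diag_B(U_c D_{c,1} U_cᵀ, …, U_c D_{c,n} U_cᵀ)`, `D_{c,i} = diag_v(E[(U_cᵀ gᵢ)^{⊙2}])`,
the loss `‖O ⊗ (U_c U_cᵀ) − F̃_c‖_F²` over positive diagonal `O` is minimized at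
`Oᵢᵢ = E[Σₖ (U_cᵀ gᵢ)ₖ²]/(m−r) = E[gᵢᵀgᵢ − Σₖ (Uᵀ gᵢ)ₖ²]/(m−r)`. -/
theorem stmt16 {m n r s : ℕ} {ι : Type*} [Fintype ι]
    (w : ι → ℝ) (hw : ∀ k, 0 ≤ w k) (hw1 : ∑ k, w k = 1)
    (G : ι → Matrix (Fin m) (Fin n) ℝ)
    (Ut : Matrix (Fin m) (Fin r ⊕ Fin s) ℝ)
    (hU1 : Utᵀ * Ut = 1) (hU2 : Ut * Utᵀ = 1)
    (U : Matrix (Fin m) (Fin r) ℝ) (hU : U = Ut.submatrix id Sum.inl)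
    (Uc : Matrix (Fin m) (Fin s) ℝ) (hUc : Uc = Ut.submatrix id Sum.inr)
    -- D_{c,i} = diag_v(E[(U_cᵀ gᵢ)^{⊙2}])
    (Dc : Fin n → Matrix (Fin s) (Fin s) ℝ)
    (hDc : ∀ i, Dc i = Matrix.diagonal (fun k => ∑ t, w t * ((Ucᵀ * G t) k i) ^ 2))
    -- F̃_c = block diagonal with blocks U_c D_{c,i} U_cᵀ (indexed compatibly with O ⊗ U_c U_cᵀ)
    (Fc : Matrix (Fin n × Fin m) (Fin n × Fin m) ℝ)
    (hFc : Fc = Matrix.of fun p q =>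
      if p.1 = q.1 then (Uc * Dc p.1 * Ucᵀ) p.2 q.2 else 0)
    -- optimal diagonal entries
    (ostar : Fin n → ℝ)
    (hostar : ∀ i, ostar i = (∑ t, w t * ∑ k, ((Ucᵀ * G t) k i) ^ 2) / (s : ℝ)) :
    (∀ i, ostar i =
        (∑ t, w t * ((∑ a, G t a i ^ 2) - ∑ k, ((Uᵀ * G t) k i) ^ 2)) / (s : ℝ)) ∧
      ∀ o : Fin n → ℝ, (∀ i, 0 < o i) →
        sqFrob (Matrix.diagonal ostar ⊗ₖ (Uc * Ucᵀ) - Fc) ≤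
          sqFrob (Matrix.diagonal o ⊗ₖ (Uc * Ucᵀ) - Fc) := by
  -- Orthonormality of Uc's columns
  have hUcUc : Ucᵀ * Uc = 1 := by
    subst hUc
    ext k l
    have h := congrFun (congrFun hU1 (Sum.inr k)) (Sum.inr l)
    simpa [Matrix.mul_apply, Matrix.one_apply, Matrix.transpose_apply] using h
  -- Part 1: energy identity
  have part1 : ∀ i, ostar i =
      (∑ t, w t * ((∑ a, G t a i ^ 2) - ∑ k, ((Uᵀ * G t) k i) ^ 2)) / (s : ℝ) := by
    intro i
    rw [hostar i]
    congr 1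
    apply Finset.sum_congr rfl
    intro t _
    congr 1
    -- ∑_k ((Ucᵀ G) k i)² = ∑_a (G a i)² - ∑_k ((Uᵀ G) k i)²
    have key : ∑ j : Fin r ⊕ Fin s, ((Utᵀ * G t) j i) ^ 2 = ∑ a, G t a i ^ 2 := by
      have h := congrFun (congrFun (congrArg (fun M => (G t)ᵀ * M * G t) hU2) i) i
      simp only [Matrix.mul_one] at h
      have lhs : ((G t)ᵀ * (Ut * Utᵀ) * G t) i i
          = ∑ j : Fin r ⊕ Fin s, ((Utᵀ * G t) j i) ^ 2 := by
        have : (G t)ᵀ * (Ut * Utᵀ) * G t = (Utᵀ * G t)ᵀ * (Utᵀ * G t) := by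
          simp only [Matrix.transpose_mul, Matrix.transpose_transpose]
          simp [Matrix.mul_assoc]
        rw [this]
        simp [Matrix.mul_apply, Matrix.transpose_apply, sq, mul_comm]
      have rhs : ((G t)ᵀ * G t) i i = ∑ a, G t a i ^ 2 := by
        simp [Matrix.mul_apply, Matrix.transpose_apply, sq]
      exact lhs.symm.trans (h.trans rhs)
    rw [Fintype.sum_sum_type] at key
    have hl : ∀ k : Fin r, ((Utᵀ * G t) (Sum.inl k) i) = (Uᵀ * G t) k i := by
      intro k; subst hU; simp [Matrix.mul_apply, Matrix.transpose_apply]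
    have hr : ∀ k : Fin s, ((Utᵀ * G t) (Sum.inr k) i) = (Ucᵀ * G t) k i := by
      intro k; subst hUc; simp [Matrix.mul_apply, Matrix.transpose_apply]
    simp only [hl, hr] at key
    linarith [key]
  refine ⟨part1, ?_⟩
  -- Part 2: optimality
  intro o ho
  set d : Fin n → Fin s → ℝ := fun i k => ∑ t, w t * ((Ucᵀ * G t) k i) ^ 2 with hd
  -- loss formula
  have loss : ∀ v : Fin n → ℝ,
      sqFrob (Matrix.diagonal v ⊗ₖ (Uc * Ucᵀ) - Fc)
        = ∑ i, ∑ k, (v i - d i k) ^ 2 := by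
    intro v
    have entry : ∀ (i j : Fin n) (a b : Fin m),
        (Matrix.diagonal v ⊗ₖ (Uc * Ucᵀ) - Fc) (i, a) (j, b)
          = if i = j then (Uc * (v i • (1 : Matrix (Fin s) (Fin s) ℝ) - Dc i) * Ucᵀ) a b
            else 0 := by
      intro i j a b
      rw [hFc]
      simp only [Matrix.sub_apply, Matrix.kroneckerMap_apply, Matrix.diagonal_apply,
        Matrix.of_apply]
      by_cases hij : i = j
      · subst hij
        simp only [if_pos rfl]
        have : Uc * (v i • (1 : Matrix (Fin s) (Fin s) ℝ) - Dc i) * Ucᵀ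
            = v i • (Uc * Ucᵀ) - Uc * Dc i * Ucᵀ := by
          rw [Matrix.mul_sub, Matrix.sub_mul]
          congr 1
          rw [Matrix.mul_smul, Matrix.mul_one, Matrix.smul_mul]
        rw [this]
        simp [Matrix.sub_apply, Matrix.smul_apply, smul_eq_mul]
      · simp [hij]
    unfold sqFrob
    rw [Fintype.sum_prod_type]
    have : ∀ i a, ∑ q : Fin n × Fin m, ((Matrix.diagonal v ⊗ₖ (Uc * Ucᵀ) - Fc) (i, a) q) ^ 2
        = ∑ b, ((Uc * (v i • (1 : Matrix (Fin s) (Fin s) ℝ) - Dc i) * Ucᵀ) a b) ^ 2 := by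
      intro i a
      rw [Fintype.sum_prod_type]
      rw [Finset.sum_eq_single i]
      · apply Finset.sum_congr rfl
        intro b _
        rw [entry i i a b, if_pos rfl]
      · intro j _ hj
        apply Finset.sum_eq_zero
        intro b _
        rw [entry i j a b, if_neg (fun h => hj h.symm)]
        norm_num
      · intro h; exact absurd (Finset.mem_univ i) h
    simp only [this]
    apply Finset.sum_congr rfl
    intro i _
    rw [frob_conj Uc hUcUc]
    have hA : (v i • (1 : Matrix (Fin s) (Fin s) ℝ) - Dc i)
        = Matrix.diagonal (fun k => v i - d i k) := by
      rw [hDc i]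
      ext k l
      by_cases hkl : k = l
      · subst hkl; simp [Matrix.diagonal_apply, Matrix.one_apply, hd]
      · simp [Matrix.diagonal_apply, Matrix.one_apply, hkl]
    rw [hA]
    apply Finset.sum_congr rfl
    intro k _
    rw [Finset.sum_eq_single k]
    · simp [Matrix.diagonal_apply]
    · intro l _ hl
      rw [Matrix.diagonal_apply_ne _ (fun h : k = l => hl h.symm)]
      norm_num
    · intro h; exact absurd (Finset.mem_univ k) h
  rw [loss, loss]
  apply Finset.sum_le_sum
  intro i _
  have hostar' : ostar i = (∑ k, d i k) / (s : ℝ) := by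
    rw [hostar i]
    congr 1
    rw [Finset.sum_comm]
    apply Finset.sum_congr rfl
    intro t _
    rw [Finset.mul_sum]
  rw [hostar']
  exact min_quad (d i) (o i)
end

section
/- Perron eigenvector uniqueness in the positive cone: if A ∈ ℝ^{n×n} has strictly positive entries, then A has a positive eigenvalue r (the spectral radius) with an eigenvector v having all positive components, and any eigenvector of A with all nonnegative, not all zero, components is a positive scalar multiple of v. -/
open Matrix


lemma aux_mulVec_pos {n : ℕ} (A : Matrix (Fin n) (Fin n) ℝ) (hA : ∀ i j, 0 < A i j)
    {w : Fin n → ℝ} (hw : ∀ i, 0 ≤ w i) {j : Fin n} (hj : 0 < w j) (i : Fin n) :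
    0 < A.mulVec w i := by
  unfold Matrix.mulVec dotProduct
  exact Finset.sum_pos' (fun k _ => mul_nonneg (hA i k).le (hw k))
    ⟨j, Finset.mem_univ j, mul_pos (hA i j) hj⟩

lemma aux_exists_pos {n : ℕ} {w : Fin n → ℝ} (hw : ∀ i, 0 ≤ w i) (hne : w ≠ 0) :
    ∃ j, 0 < w j := by
  by_contra h
  push_neg at h
  exact hne (funext fun i => le_antisymm (h i) (hw i))

lemma aux_exists_eigen {n : ℕ} (hn : 0 < n) (A : Matrix (Fin n) (Fin n) ℝ)
    (hA : ∀ i j, 0 < A i j) :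
    ∃ r : ℝ, 0 < r ∧ ∃ v : Fin n → ℝ, (∀ i, 0 < v i) ∧ A.mulVec v = r • v := by
  haveI : Nonempty (Fin n) := ⟨⟨0, hn⟩⟩
  have hune : (Finset.univ : Finset (Fin n)).Nonempty := Finset.univ_nonempty
  set S : Set (Fin n → ℝ) := {v | (∀ i, 0 ≤ v i) ∧ ∑ i, v i = 1} with hS
  -- members of S are nonzero with a positive coordinate
  have hSpos : ∀ v ∈ S, ∃ j, 0 < v j := by
    intro v hv
    apply aux_exists_pos hv.1
    intro h0
    have h2 := hv.2
    rw [h0] at h2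
    simp at h2
  have hSmul : ∀ v ∈ S, ∀ i, 0 < A.mulVec v i := by
    intro v hv i
    obtain ⟨j, hj⟩ := hSpos v hv
    exact aux_mulVec_pos A hA hv.1 hj i
  -- compactness
  have hSclosed : IsClosed S := by
    have h1 : IsClosed {v : Fin n → ℝ | ∀ i, 0 ≤ v i} := by
      have : {v : Fin n → ℝ | ∀ i, 0 ≤ v i} = ⋂ i, (fun v : Fin n → ℝ => v i) ⁻¹' Set.Ici 0 := by
        ext v; simp [Set.mem_iInter]
      rw [this]
      exact isClosed_iInter fun i => isClosed_Ici.preimage (continuous_apply i)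
    have h2 : IsClosed {v : Fin n → ℝ | ∑ i, v i = 1} :=
      isClosed_eq (continuous_finset_sum _ fun i _ => continuous_apply i) continuous_const
    exact h1.inter h2
  have hSsub : S ⊆ Set.Icc (0 : Fin n → ℝ) 1 := by
    intro v hv
    constructor
    · intro i; exact hv.1 i
    · intro i
      calc v i ≤ ∑ j, v j := Finset.single_le_sum (fun j _ => hv.1 j) (Finset.mem_univ i)
      _ = 1 := hv.2
  have hScompact : IsCompact S := (isCompact_Icc).of_isClosed_subset hSclosed hSsub
  have hSne : S.Nonempty := by
    refine ⟨fun _ => (n : ℝ)⁻¹, fun i => by positivity, ?_⟩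
    simp [Finset.sum_const, Finset.card_univ]
    field_simp
  -- the function to maximize
  set g : (Fin n → ℝ) → ℝ :=
    fun v => Finset.univ.inf' hune (fun i => A.mulVec (A.mulVec v) i / A.mulVec v i) with hg
  have hcontmv : ∀ (B : Matrix (Fin n) (Fin n) ℝ) (i : Fin n),
      Continuous (fun v : Fin n → ℝ => B.mulVec v i) := by
    intro B i
    unfold Matrix.mulVec dotProduct
    exact continuous_finset_sum _ fun j _ => continuous_const.mul (continuous_apply j)
  have hgcont : ContinuousOn g S := by
    intro v hv
    apply ContinuousWithinAt.finset_inf'_apply hune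
    intro i _
    apply ContinuousWithinAt.div
    · have : Continuous fun v : Fin n → ℝ => (A * A).mulVec v i := hcontmv (A * A) i
      have h2 : (fun v : Fin n → ℝ => A.mulVec (A.mulVec v) i)
          = fun v : Fin n → ℝ => (A * A).mulVec v i := by
        funext v; rw [← Matrix.mulVec_mulVec]
      rw [h2]
      exact this.continuousWithinAt
    · exact (hcontmv A i).continuousWithinAt
    · exact (hSmul v hv i).ne'
  obtain ⟨v₀, hv₀S, hmax⟩ := hScompact.exists_isMaxOn hSne hgcont
  set z := A.mulVec v₀ with hzdef
  have hz : ∀ i, 0 < z i := hSmul v₀ hv₀S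
  set r := g v₀ with hrdef
  have hr_le : ∀ i, r * z i ≤ A.mulVec z i := by
    intro i
    have := Finset.inf'_le (b := i)
      (fun i => A.mulVec (A.mulVec v₀) i / A.mulVec v₀ i) (Finset.mem_univ i)
    rw [← hzdef] at this
    calc r * z i ≤ (A.mulVec z i / z i) * z i := by
          apply mul_le_mul_of_nonneg_right _ (hz i).le
          exact this
      _ = A.mulVec z i := div_mul_cancel₀ _ (hz i).ne'
  have hr_pos : 0 < r := by
    rw [hrdef, hg, Finset.lt_inf'_iff]
    intro i _
    exact div_pos (aux_mulVec_pos A hA (fun k => (hz k).le) (hz ⟨0, hn⟩) i) (hz i)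
  -- claim: A z = r z
  have heig : A.mulVec z = r • z := by
    by_contra hne
    have hex : ∃ i₀, A.mulVec z i₀ ≠ r * z i₀ := by
      by_contra h; push_neg at h
      exact hne (funext fun i => by rw [h i]; rfl)
    obtain ⟨i₀, hi₀⟩ := hex
    set u : Fin n → ℝ := fun i => A.mulVec z i - r * z i with hu
    have hu0 : ∀ i, 0 ≤ u i := fun i => sub_nonneg.mpr (hr_le i)
    have hui₀ : 0 < u i₀ := (hu0 i₀).lt_of_ne (Ne.symm (sub_ne_zero.mpr hi₀))
    have hAu : ∀ i, 0 < A.mulVec u i := fun i => aux_mulVec_pos A hA hu0 hui₀ i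
    have hkey : ∀ i, r < A.mulVec (A.mulVec z) i / A.mulVec z i := by
      intro i
      rw [lt_div_iff₀ (aux_mulVec_pos A hA (fun k => (hz k).le) (hz ⟨0, hn⟩) i)]
      have : A.mulVec u = A.mulVec (A.mulVec z) - r • A.mulVec z := by
        have : u = A.mulVec z - r • z := by funext i; simp [hu]
        rw [this, Matrix.mulVec_sub, Matrix.mulVec_smul]
      have h2 := hAu i
      rw [this] at h2
      simpa [Pi.sub_apply, sub_pos, mul_comm] using h2
    -- normalize z into S and contradict maximality
    set c := ∑ i, z i with hc
    have hcpos : 0 < c := Finset.sum_pos (fun i _ => hz i) hune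
    set v₁ : Fin n → ℝ := c⁻¹ • z with hv₁
    have hv₁S : v₁ ∈ S := by
      constructor
      · intro i
        exact mul_nonneg (inv_nonneg.mpr hcpos.le) (hz i).le
      · simp only [hv₁, Pi.smul_apply, smul_eq_mul, ← Finset.mul_sum]
        rw [← hc, inv_mul_cancel₀ hcpos.ne']
    have hgv₁ : g v₁ = Finset.univ.inf' hune
        (fun i => A.mulVec (A.mulVec z) i / A.mulVec z i) := by
      rw [hg]
      refine Finset.inf'_congr hune rfl (fun i _ => ?_)
      rw [hv₁, Matrix.mulVec_smul, Matrix.mulVec_smul]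
      simp only [Pi.smul_apply, smul_eq_mul]
      rw [mul_div_mul_left _ _ (inv_ne_zero hcpos.ne')]
    have hlt : r < g v₁ := by
      rw [hgv₁, Finset.lt_inf'_iff]
      intro i _
      exact hkey i
    exact absurd (hmax hv₁S) (not_le.mpr hlt)
  exact ⟨r, hr_pos, z, hz, heig⟩


/-- Perron eigenvector uniqueness in the positive cone: an entrywise
positive matrix `A` has a positive eigenvalue `r` (the spectral radius, dominating the
absolute value of every real eigenvalue) with an entrywise positive eigenvector `v`, and
every nonnegative nonzero eigenvector of `A` is a positive scalar multiple of `v`. -/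
theorem stmt19 {n : ℕ} (A : Matrix (Fin n) (Fin n) ℝ) (hA : ∀ i j, 0 < A i j) :
    ∃ r : ℝ, 0 < r ∧ ∃ v : Fin n → ℝ, (∀ i, 0 < v i) ∧ A.mulVec v = r • v ∧
      (∀ μ : ℝ, ∀ w : Fin n → ℝ, w ≠ 0 → A.mulVec w = μ • w → |μ| ≤ r) ∧
      (∀ μ : ℝ, ∀ w : Fin n → ℝ, (∀ i, 0 ≤ w i) → w ≠ 0 → A.mulVec w = μ • w →
        ∃ c : ℝ, 0 < c ∧ w = c • v) := by
  rcases Nat.eq_zero_or_pos n with hn | hn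
  · subst hn
    refine ⟨1, one_pos, fun i => i.elim0, fun i => i.elim0, ?_, ?_, ?_⟩
    · funext i; exact i.elim0
    · intro μ w hw _
      exact absurd (funext fun i => i.elim0) hw
    · intro μ w _ hw _
      exact absurd (funext fun i => i.elim0) hw
  · haveI : Nonempty (Fin n) := ⟨⟨0, hn⟩⟩
    have hune : (Finset.univ : Finset (Fin n)).Nonempty := Finset.univ_nonempty
    obtain ⟨r, hr, v, hv, hAv⟩ := aux_exists_eigen hn A hA
    obtain ⟨r', hr', u, hu, hAu⟩ := aux_exists_eigen hn Aᵀ (fun i j => hA j i)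
    -- pairing: u ⬝ᵥ (A w) = r' * (u ⬝ᵥ w)
    have hpair : ∀ w : Fin n → ℝ, u ⬝ᵥ A.mulVec w = r' * (u ⬝ᵥ w) := by
      intro w
      rw [Matrix.dotProduct_mulVec, ← Matrix.mulVec_transpose, hAu, smul_dotProduct,
        smul_eq_mul]
    have hdot_pos : ∀ w : Fin n → ℝ, (∀ i, 0 ≤ w i) → (∃ j, 0 < w j) → 0 < u ⬝ᵥ w := by
      intro w hw ⟨j, hj⟩
      exact Finset.sum_pos' (fun k _ => mul_nonneg (hu k).le (hw k))
        ⟨j, Finset.mem_univ j, mul_pos (hu j) hj⟩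
    have heigval : ∀ (μ : ℝ) (w : Fin n → ℝ), (∀ i, 0 ≤ w i) → (∃ j, 0 < w j) →
        A.mulVec w = μ • w → μ = r' := by
      intro μ w hw hwj hAw
      have h1 := hpair w
      rw [hAw] at h1
      have h2 : μ * (u ⬝ᵥ w) = r' * (u ⬝ᵥ w) := by
        rw [← h1, dotProduct_smul, smul_eq_mul]
      exact mul_right_cancel₀ (hdot_pos w hw hwj).ne' h2
    have hrr' : r = r' := heigval r v (fun i => (hv i).le) ⟨⟨0, hn⟩, hv _⟩ hAv
    refine ⟨r, hr, v, hv, hAv, ?_, ?_⟩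
    · -- dominance
      intro μ w hwne hAw
      set aw : Fin n → ℝ := fun i => |w i| with haw
      have haw0 : ∀ i, 0 ≤ aw i := fun i => abs_nonneg _
      have hawj : ∃ j, 0 < aw j := by
        have : ∃ j, w j ≠ 0 := by
          by_contra h; push_neg at h
          exact hwne (funext h)
        obtain ⟨j, hj⟩ := this
        exact ⟨j, abs_pos.mpr hj⟩
      have hptwise : ∀ i, |μ| * aw i ≤ A.mulVec aw i := by
        intro i
        have h1 : |μ| * aw i = |(A.mulVec w) i| := by
          rw [hAw]; simp [haw, abs_mul]
        rw [h1]
        unfold Matrix.mulVec dotProduct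
        calc |∑ j, A i j * w j| ≤ ∑ j, |A i j * w j| := Finset.abs_sum_le_sum_abs _ _
          _ = ∑ j, A i j * aw j := by
              refine Finset.sum_congr rfl (fun j _ => ?_)
              rw [abs_mul, abs_of_pos (hA i j)]
      have h2 : |μ| * (u ⬝ᵥ aw) ≤ r' * (u ⬝ᵥ aw) := by
        rw [← hpair aw]
        unfold dotProduct
        rw [Finset.mul_sum]
        refine Finset.sum_le_sum (fun i _ => ?_)
        calc |μ| * (u i * aw i) = u i * (|μ| * aw i) := by ring
          _ ≤ u i * A.mulVec aw i := by
              exact mul_le_mul_of_nonneg_left (hptwise i) (hu i).le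
      rw [hrr']
      exact le_of_mul_le_mul_right (by linarith [h2]) (hdot_pos aw haw0 hawj)
    · -- uniqueness
      intro μ w hw0 hwne hAw
      obtain ⟨j, hj⟩ := aux_exists_pos hw0 hwne
      have hμ : μ = r := by rw [hrr']; exact heigval μ w hw0 ⟨j, hj⟩ hAw
      rw [hμ] at hAw
      obtain ⟨i₀, _, hi₀⟩ := Finset.exists_mem_eq_inf' hune (fun i => w i / v i)
      set t := Finset.univ.inf' hune (fun i => w i / v i) with ht
      have htle : ∀ i, t * v i ≤ w i := by
        intro i
        have h1 : t ≤ w i / v i := Finset.inf'_le _ (Finset.mem_univ i)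
        calc t * v i ≤ (w i / v i) * v i := mul_le_mul_of_nonneg_right h1 (hv i).le
          _ = w i := div_mul_cancel₀ _ (hv i).ne'
      set x : Fin n → ℝ := fun i => w i - t * v i with hx
      have hx0 : ∀ i, 0 ≤ x i := fun i => sub_nonneg.mpr (htle i)
      have hxi₀ : x i₀ = 0 := by
        simp only [hx]
        rw [hi₀, div_mul_cancel₀ _ (hv i₀).ne', sub_self]
      have hAx : A.mulVec x = r • x := by
        have hxeq : x = w - t • v := by funext i; simp [hx]
        rw [hxeq, Matrix.mulVec_sub, Matrix.mulVec_smul, hAw, hAv, smul_sub, smul_comm r t]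
      have hxzero : x = 0 := by
        by_contra hxne
        obtain ⟨k, hk⟩ := aux_exists_pos hx0 hxne
        have h1 : 0 < A.mulVec x i₀ := aux_mulVec_pos A hA hx0 hk i₀
        rw [hAx] at h1
        simp [hxi₀] at h1
      have hwt : w = t • v := by
        funext i
        have := congrFun hxzero i
        simp only [hx, Pi.zero_apply] at this
        simp [Pi.smul_apply, smul_eq_mul]
        linarith
      have htpos : 0 < t := by
        have h0 : 0 ≤ t := Finset.le_inf' hune _ (fun i _ => div_nonneg (hw0 i) (hv i).le)
        rcases h0.lt_or_eq with h | h
        · exact h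
        · exfalso
          apply hwne
          rw [hwt, ← h]
          simp
      exact ⟨t, htpos, hwt⟩
end
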